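/- arXiv:1712.08784 — 2 statements merged into one kernel-verified Lean document; each statement's English description precedes it below -/
import Mathlib

section
/- Let N be Poisson with mean μ > 0 and let X₁, X₂, ... be i.i.d. random variables in [0,1] with mean m = E[X₁] > 0, independent of N. Then E[∏_{i=1}^{N−1} X_i | N > 0] = (exp(μm) − 1)·exp(−μ)/(m·(1 − exp(−μ))). -/
/-!
Splitting `{N > 0}` into the fibres `{N = k + 1}` and using the independence of `N` from the
sequence `X`, the fibre `{N = k + 1}` contributes `P(N = k + 1) m ^ k`; summing the Poisson series
gives `∑ₖ e^{-μ} μ^{k+1} m^k / (k+1)! = e^{-μ} (e^{μm} - 1) / m`, and `P(N > 0) = 1 - e^{-μ}`.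

Neither `N` nor the `X i` are assumed measurable. `N` is a.e.-measurable because the outer
measures of its fibres add up to one, and `X i` because its law is that of the integrable `X 0`,
hence nonzero.
-/

open MeasureTheory ProbabilityTheory Real
open scoped ENNReal ProbabilityTheory

namespace MeasureTheory

variable {Ω : Type*} [MeasurableSpace Ω] {μ : Measure Ω}

theorem nullMeasurableSet_of_measure_add_measure_compl_le [IsFiniteMeasure μ] {s : Set Ω}
    (h : μ s + μ sᶜ ≤ μ Set.univ) : NullMeasurableSet s μ := by
  set t := toMeasurable μ s
  set u := toMeasurable μ sᶜ
  have hut : t ∪ u = Set.univ :=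
    Set.eq_univ_of_forall fun ω => (em (ω ∈ s)).imp (subset_toMeasurable μ s ·)
      (subset_toMeasurable μ sᶜ ·)
  have htu : μ (t ∩ u) = 0 := by
    have key := measure_union_add_inter (μ := μ) t (measurableSet_toMeasurable μ sᶜ)
    rw [hut, measure_toMeasurable, measure_toMeasurable] at key
    exact nonpos_iff_eq_zero.1 <| ENNReal.le_of_add_le_add_left (measure_ne_top μ _)
      (by rw [key, add_zero]; exact h)
  refine (measurableSet_toMeasurable μ s).nullMeasurableSet.congr (ae_eq_set.2 ⟨?_, ?_⟩)
  · exact measure_mono_null (fun ω hω => (⟨hω.1, subset_toMeasurable μ sᶜ hω.2⟩ : ω ∈ t ∩ u)) htu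
  · simp [Set.sdiff_eq_empty.2 (subset_toMeasurable μ s)]

theorem nullMeasurableSet_fiber_of_tsum_measure_fiber_eq {α : Type*} [Countable α]
    [IsFiniteMeasure μ] {f : Ω → α} (h : ∑' a, μ {ω | f ω = a} = μ Set.univ) (a : α) :
    NullMeasurableSet {ω | f ω = a} μ := by
  refine nullMeasurableSet_of_measure_add_measure_compl_le (h ▸ ?_)
  have hcompl : {ω | f ω = a}ᶜ = ⋃ b ∈ ({a}ᶜ : Set α), {ω | f ω = b} := by
    ext ω; simp [eq_comm]
  calc μ {ω | f ω = a} + μ {ω | f ω = a}ᶜ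
      ≤ ∑' b : ({a} : Set α), μ {ω | f ω = b} + ∑' b : ({a}ᶜ : Set α), μ {ω | f ω = b} := by
        rw [tsum_singleton a (fun b => μ {ω | f ω = b}), hcompl]
        exact add_le_add_right (measure_biUnion_le _ (Set.to_countable _) _) _
    _ = ∑' b, μ {ω | f ω = b} :=
        ENNReal.summable.tsum_add_tsum_compl (f := fun b => μ {ω | f ω = b}) (s := {a})
          ENNReal.summable

theorem aemeasurable_of_tsum_measure_fiber_eq {α : Type*} [Countable α] [MeasurableSpace α]
    [MeasurableSingletonClass α] [IsFiniteMeasure μ] {f : Ω → α}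
    (h : ∑' a, μ {ω | f ω = a} = μ Set.univ) : AEMeasurable f μ := by
  refine NullMeasurable.aemeasurable fun t _ => ?_
  rw [← Set.biUnion_preimage_singleton]
  exact .biUnion t.to_countable fun a _ => nullMeasurableSet_fiber_of_tsum_measure_fiber_eq h a

theorem aemeasurable_of_map_eq_map {β : Type*} [MeasurableSpace β] [NeZero μ] {f g : Ω → β}
    (h : μ.map f = μ.map g) (hg : AEMeasurable g μ) : AEMeasurable f μ :=
  .of_map_ne_zero (h ▸ (Measure.map_ne_zero_iff hg).2 (NeZero.ne μ))

theorem setIntegral_pos_eq_tsum_setIntegral_succ {E : Type*} [NormedAddCommGroup E]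
    [NormedSpace ℝ E] {N : Ω → ℕ} (hN : AEMeasurable N μ) {F : Ω → E} (hF : Integrable F μ) :
    ∫ ω in {ω | 0 < N ω}, F ω ∂μ = ∑' k, ∫ ω in {ω | N ω = k + 1}, F ω ∂μ := by
  have hU : {ω | 0 < N ω} = ⋃ k, {ω | N ω = k + 1} := by
    ext ω
    simp [Nat.exists_eq_add_one]
  rw [hU]
  refine integral_iUnion_ae (fun k => hN.nullMeasurable (measurableSet_singleton (k + 1)))
    (fun i j hij => (Set.disjoint_left.2 fun ω hi hj => hij ?_).aedisjoint) hF.integrableOn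
  simp only [Set.mem_ofPred_eq] at hi hj
  omega

theorem integrable_prod_range_comp [IsFiniteMeasure μ] {N : Ω → ℕ} {X : ℕ → Ω → ℝ}
    (hN : AEMeasurable N μ) (hXm : ∀ i, AEMeasurable (X i) μ) (hX : ∀ i ω, |X i ω| ≤ 1) (n : ℕ → ℕ) :
    Integrable (fun ω => ∏ i ∈ Finset.range (n (N ω)), X i ω) μ := by
  have hprod : Measurable fun q : (ℕ → ℝ) × ℕ => ∏ i ∈ Finset.range (n q.2), q.1 i :=
    measurable_from_prod_countable_left fun k =>
      Finset.measurable_prod (Finset.range (n k)) fun i _ => measurable_pi_apply i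
  refine .of_bound (hprod.comp_aemeasurable
    ((aemeasurable_pi_lambda _ hXm).prodMk hN)).aestronglyMeasurable 1 (.of_forall fun ω => ?_)
  rw [Real.norm_eq_abs, Finset.abs_prod]
  exact Finset.prod_le_one (fun i _ => abs_nonneg _) fun i _ => hX i ω

end MeasureTheory

namespace ProbabilityTheory

variable {Ω : Type*} [MeasurableSpace Ω] {μ : Measure Ω}

theorem IndepFun.setIntegral_preimage_eq_mul {α β : Type*} [MeasurableSpace α] [MeasurableSpace β]
    {N : Ω → α} {Y : Ω → β} (hNY : IndepFun N Y μ) (hN : AEMeasurable N μ)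
    (hY : AEMeasurable Y μ) {t : Set α} (ht : MeasurableSet t) {f : β → ℝ}
    (hf : AEStronglyMeasurable f (μ.map Y)) :
    ∫ ω in N ⁻¹' t, f (Y ω) ∂μ = μ.real (N ⁻¹' t) * ∫ ω, f (Y ω) ∂μ := by
  have hNt : NullMeasurableSet (N ⁻¹' t) μ := hN.nullMeasurable ht
  calc ∫ ω in N ⁻¹' t, f (Y ω) ∂μ = ∫ ω, t.indicator 1 (N ω) * f (Y ω) ∂μ := by
        rw [← integral_indicator₀ hNt]
        congr with ω
        by_cases hω : N ω ∈ t <;> simp [hω]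
    _ = (∫ ω, t.indicator 1 (N ω) ∂μ) * ∫ ω, f (Y ω) ∂μ :=
        hNY.integral_fun_comp_mul_comp hN hY
          (measurable_one.indicator ht).aestronglyMeasurable hf
    _ = μ.real (N ⁻¹' t) * ∫ ω, f (Y ω) ∂μ := by
        have hind : (fun ω => t.indicator (1 : α → ℝ) (N ω)) = (N ⁻¹' t).indicator 1 := rfl
        rw [hind, integral_indicator₀ hNt]
        simp

theorem iIndepFun.integral_finset_prod {ι 𝕜 : Type*} [RCLike 𝕜] {X : ι → Ω → 𝕜}
    (hX : iIndepFun X μ) (hXm : ∀ i, AEMeasurable (X i) μ) (s : Finset ι) :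
    ∫ ω, ∏ i ∈ s, X i ω ∂μ = ∏ i ∈ s, ∫ ω, X i ω ∂μ := by
  simp_rw [← Finset.prod_coe_sort s]
  exact (hX.precomp Subtype.val_injective).integral_fun_prod_eq_prod_integral
    fun i : s => (hXm i).aestronglyMeasurable

theorem setIntegral_fiber_prod_range_eq_mul {N : Ω → ℕ} {X : ℕ → Ω → ℝ} (hX : iIndepFun X μ)
    (hXm : ∀ i, AEMeasurable (X i) μ) (hN : AEMeasurable N μ)
    (hNX : IndepFun N (fun ω i => X i ω) μ) (n : ℕ → ℕ) (k : ℕ) :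
    ∫ ω in {ω | N ω = k}, ∏ i ∈ Finset.range (n (N ω)), X i ω ∂μ =
      μ.real {ω | N ω = k} * ∏ i ∈ Finset.range (n k), ∫ ω, X i ω ∂μ := by
  have hk : NullMeasurableSet {ω | N ω = k} μ := hN.nullMeasurable (measurableSet_singleton k)
  rw [setIntegral_congr_fun₀ hk (g := fun ω => ∏ i ∈ Finset.range (n k), X i ω)
      fun ω (hω : N ω = k) => by rw [hω], ← hX.integral_finset_prod hXm]
  exact hNX.setIntegral_preimage_eq_mul hN (aemeasurable_pi_lambda _ hXm)
    (measurableSet_singleton k) (f := fun x => ∏ i ∈ Finset.range (n k), x i) (by fun_prop)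

end ProbabilityTheory

theorem Real.hasSum_exp_neg_mul_pow_succ_div_factorial_mul_pow (μ : ℝ) {m : ℝ} (hm : m ≠ 0) :
    HasSum (fun k : ℕ => exp (-μ) * μ ^ (k + 1) / (k + 1).factorial * m ^ k)
      (exp (-μ) * (exp (μ * m) - 1) / m) := by
  have hexp : HasSum (fun k : ℕ => (μ * m) ^ k / k.factorial) (exp (μ * m)) := by
    rw [Real.exp_eq_exp_ℝ]; exact NormedSpace.expSeries_div_hasSum_exp (μ * m)
  have htail := ((hasSum_nat_add_iff' 1).2 hexp).mul_left (exp (-μ) / m)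
  rw [Finset.sum_range_one, pow_zero, Nat.factorial_zero, Nat.cast_one, div_one] at htail
  have hterm : (fun k : ℕ => exp (-μ) * μ ^ (k + 1) / (k + 1).factorial * m ^ k) =
      fun k => exp (-μ) / m * ((μ * m) ^ (k + 1) / (k + 1).factorial) := by
    ext k
    field_simp
    ring
  rwa [hterm, mul_div_right_comm]

/-- For `N ~ Poisson(μ)` and i.i.d. `[0,1]`-valued `X i` with mean `m > 0`, independent
of `N`: `E[∏_{i=1}^{N−1} X_i | N > 0] = (exp(μm) − 1) exp(−μ)/(m (1 − exp(−μ)))`. -/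
theorem poisson_product_conditional {Ω : Type*} [MeasureSpace Ω]
    [IsProbabilityMeasure (ℙ : Measure Ω)]
    (μ m : ℝ) (hμ : 0 < μ)
    (N : Ω → ℕ) (X : ℕ → Ω → ℝ)
    (hN : ∀ k : ℕ, ℙ {ω | N ω = k} =
      ENNReal.ofReal (Real.exp (-μ) * μ ^ k / (k.factorial : ℝ)))
    (hrange : ∀ i ω, X i ω ∈ Set.Icc (0:ℝ) 1)
    (hiid : iIndepFun X ℙ)
    (hident : ∀ i, Measure.map (X i) ℙ = Measure.map (X 0) ℙ)
    (hm : m = ∫ ω, X 0 ω ∂ℙ) (hmpos : 0 < m)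
    (hNind : IndepFun N (fun ω i => X i ω) ℙ) :
    ∫ ω, (∏ i ∈ Finset.range (N ω - 1), X i ω) ∂(ℙ[|{ω | 0 < N ω}]) =
      (Real.exp (μ * m) - 1) * Real.exp (-μ) / (m * (1 - Real.exp (-μ))) := by
  have hpoisson : HasSum (fun k : ℕ => exp (-μ) * μ ^ k / k.factorial) 1 := by
    simpa [Real.coe_toNNReal _ hμ.le] using hasSum_one_poissonMeasure μ.toNNReal
  have hNm : AEMeasurable N ℙ := by
    refine aemeasurable_of_tsum_measure_fiber_eq ?_
    rw [tsum_congr hN, ← ENNReal.ofReal_tsum_of_nonneg (fun k => by positivity)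
      hpoisson.summable, hpoisson.tsum_eq, ENNReal.ofReal_one, measure_univ]
  have hXm : ∀ i, AEMeasurable (X i) ℙ := fun i => aemeasurable_of_map_eq_map (hident i)
    (Integrable.of_integral_ne_zero (hm ▸ hmpos.ne')).aemeasurable
  have hXmean : ∀ i, ∫ ω, X i ω ∂ℙ = m := fun i =>
    hm ▸ (IdentDistrib.integral_eq ⟨hXm i, hXm 0, hident i⟩)
  have hF : Integrable (fun ω => ∏ i ∈ Finset.range (N ω - 1), X i ω) ℙ :=
    integrable_prod_range_comp hNm hXm
      (fun i ω => abs_le.2 ⟨by linarith [(hrange i ω).1], (hrange i ω).2⟩) (· - 1)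
  have hfiber : ∀ k : ℕ, ∫ ω in {ω | N ω = k + 1}, ∏ i ∈ Finset.range (N ω - 1), X i ω ∂ℙ =
      exp (-μ) * μ ^ (k + 1) / (k + 1).factorial * m ^ k := by
    intro k
    rw [setIntegral_fiber_prod_range_eq_mul hiid hXm hNm hNind (· - 1), Nat.add_sub_cancel,
      Finset.prod_congr rfl fun i _ => hXmean i, Finset.prod_const, Finset.card_range,
      measureReal_def, hN, ENNReal.toReal_ofReal (by positivity)]
  have hNpos : (ℙ {ω | 0 < N ω}).toReal = 1 - exp (-μ) := by
    have hcompl : {ω | 0 < N ω} = {ω | N ω = 0}ᶜ := by ext ω; simp [Nat.pos_iff_ne_zero]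
    have h0 : NullMeasurableSet {ω | N ω = 0} ℙ := hNm.nullMeasurable (measurableSet_singleton 0)
    rw [hcompl, ← measureReal_def, probReal_compl_eq_one_sub₀ h0,
      measureReal_def, hN 0, ENNReal.toReal_ofReal (by positivity)]
    simp
  rw [ProbabilityTheory.cond, integral_smul_measure, ENNReal.toReal_inv,
    hNpos, setIntegral_pos_eq_tsum_setIntegral_succ hNm hF, tsum_congr hfiber,
    (Real.hasSum_exp_neg_mul_pow_succ_div_factorial_mul_pow μ hmpos.ne').tsum_eq, smul_eq_mul]
  field_simp
end

section
/- For d ≤ D, the region b(x₀, D) with ‖x₀‖ = d is contained in the union of the half-disk of radius d + D and the half-disk of radius √(D² − d²), both centered at the origin, where the half-disk of radius d + D lies on the side of the line through the origin perpendicular to x₀ containing x₀. -/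
open MeasureTheory Real

noncomputable section

abbrev E2 := EuclideanSpace ℝ (Fin 2)

/-- On the far side of the hyperplane through the origin perpendicular to `x`, the angle at the
origin between `x` and `y` is obtuse, so `‖y‖² + ‖x‖² ≤ ‖y - x‖² ≤ r²`. -/
theorem norm_le_sqrt_of_mem_closedBall_of_inner_nonpos {F : Type*} [SeminormedAddCommGroup F]
    [InnerProductSpace ℝ F] {x y : F} {r : ℝ} (hy : y ∈ Metric.closedBall x r)
    (hinner : inner ℝ y x ≤ 0) : ‖y‖ ≤ √(r ^ 2 - ‖x‖ ^ 2) := by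
  have hdist : ‖y - x‖ ^ 2 ≤ r ^ 2 := by
    rw [Metric.mem_closedBall, dist_eq_norm] at hy
    exact pow_le_pow_left₀ (norm_nonneg _) hy 2
  apply Real.le_sqrt_of_sq_le
  linarith [norm_sub_sq_real y x]

theorem disk_subset_two_half_disks_general (D d : ℝ) (x₀ : E2)
    (hx : ‖x₀‖ = d) :
    Metric.closedBall x₀ D ⊆
      {y : E2 | ‖y‖ ≤ d + D ∧ 0 ≤ (inner ℝ y x₀ : ℝ)} ∪
      {y : E2 | ‖y‖ ≤ Real.sqrt (D ^ 2 - d ^ 2) ∧ (inner ℝ y x₀ : ℝ) ≤ 0} := by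
  intro y hy
  subst hx
  rcases le_total 0 (inner ℝ y x₀) with hinner | hinner
  · exact Or.inl ⟨norm_le_of_mem_closedBall hy, hinner⟩
  · exact Or.inr ⟨norm_le_sqrt_of_mem_closedBall_of_inner_nonpos hy hinner, hinner⟩

theorem disk_subset_two_half_disks (D d : ℝ) (x₀ : E2)
    (hx : ‖x₀‖ = d) (hd : 0 ≤ d) (hdD : d ≤ D) :
    Metric.closedBall x₀ D ⊆
      {y : E2 | ‖y‖ ≤ d + D ∧ 0 ≤ (inner ℝ y x₀ : ℝ)} ∪
      {y : E2 | ‖y‖ ≤ Real.sqrt (D ^ 2 - d ^ 2) ∧ (inner ℝ y x₀ : ℝ) ≤ 0} :=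
  disk_subset_two_half_disks_general D d x₀ hx
end
end
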